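/- The function 𝔽(t₁, t₂, t₃) = t₁³/12 + (1/2)t₂t₃t₁ − (1/6)t₂³t₃ − (1/8)t₃² log t₃, defined for t₃ > 0, has constant invertible matrix of third derivatives ηᵢⱼ = ∂_{t₁}∂_{tᵢ}∂_{tⱼ}𝔽, namely η₁₁ = 1/2, η₂₃ = η₃₂ = 1/2, and all other entries 0, and 𝔽 satisfies the WDVV associativity equations with respect to η. -/

import Mathlib

/-!
The third derivatives of `Fpot` are computed in closed form: they do not depend on `t₁`, and
`∂_{t₁}∂ᵢ∂ⱼ𝔽 = ηᵢⱼ`. Writing `cᵢ` for the matrix `(∂ᵢ∂ⱼ∂ₖ𝔽)ⱼₖ`, the cyclic symmetry of third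
derivatives turns the two sides of WDVV into the `(j, q)` entries of `cᵢ η⁻¹ cₙ` and `cₙ η⁻¹ cᵢ`,
so WDVV says that the operators `η⁻¹ cᵢ` commute. Since `η⁻¹ c₁ = 1`, this reduces to the single
`3 × 3` matrix identity `η⁻¹ c₂ η⁻¹ c₃ = η⁻¹ c₃ η⁻¹ c₂`.
-/

open Matrix

/-- Partial derivatives of a function of three real variables. -/
noncomputable def P1 (f : ℝ → ℝ → ℝ → ℝ) : ℝ → ℝ → ℝ → ℝ :=
  fun x y z => deriv (fun x' => f x' y z) x
noncomputable def P2 (f : ℝ → ℝ → ℝ → ℝ) : ℝ → ℝ → ℝ → ℝ :=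
  fun x y z => deriv (fun y' => f x y' z) y
noncomputable def P3 (f : ℝ → ℝ → ℝ → ℝ) : ℝ → ℝ → ℝ → ℝ :=
  fun x y z => deriv (fun z' => f x y z') z

/-- Partial derivative in the i-th variable (i : Fin 3). -/
noncomputable def D (i : Fin 3) : (ℝ → ℝ → ℝ → ℝ) → (ℝ → ℝ → ℝ → ℝ) :=
  if i = 0 then P1 else if i = 1 then P2 else P3

/-- The potential 𝔽 = t₁³/12 + (1/2)t₂t₃t₁ − (1/6)t₂³t₃ − (1/8)t₃² log t₃. -/
noncomputable def Fpot (t₁ t₂ t₃ : ℝ) : ℝ :=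
  t₁^3/12 + (1/2) * t₂ * t₃ * t₁ - (1/6) * t₂^3 * t₃ - (1/8) * t₃^2 * Real.log t₃

/-- The flat metric η: η₁₁ = 1/2, η₂₃ = η₃₂ = 1/2, other entries 0. -/
noncomputable def eta : Matrix (Fin 3) (Fin 3) ℝ := !![1/2, 0, 0; 0, 0, 1/2; 0, 1/2, 0]

open Real

section WDVV

variable {ι R : Type*} [Fintype ι] [Semiring R]

lemma sum_sum_mul_mul_eq_mul_mul_apply (A G B : Matrix ι ι R) (j q : ι) :
    ∑ k, ∑ p, A j k * G k p * B p q = (A * G * B) j q := by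
  simp only [Matrix.mul_apply, Finset.sum_mul]
  exact Finset.sum_comm

theorem wdvv_of_commute [DecidableEq ι] {c : ι → Matrix ι ι R} {G : Matrix ι ι R}
    (hc : ∀ i j k, c i j k = c k i j) (hG : IsUnit G) (hcomm : ∀ i n, Commute (G * c i) (G * c n))
    (i j q n : ι) :
    ∑ k, ∑ p, c i j k * G k p * c p q n = ∑ k, ∑ p, c n j k * G k p * c p q i := by
  have hmul : c i * G * c n = c n * G * c i := hG.mul_left_cancel <| by
    simpa only [mul_assoc] using (hcomm i n).eq
  simp only [hc _ q n, hc _ q i]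
  rw [sum_sum_mul_mul_eq_mul_mul_apply, sum_sum_mul_mul_eq_mul_mul_apply, hmul]

end WDVV

lemma D_congr_of_ne_zero {f g : ℝ → ℝ → ℝ → ℝ} (hfg : ∀ x y z, z ≠ 0 → f x y z = g x y z)
    (i : Fin 3) {x y z : ℝ} (hz : z ≠ 0) : D i f x y z = D i g x y z := by
  fin_cases i
  · exact congrArg (deriv · x) (funext fun x' => hfg x' y z hz)
  · exact congrArg (deriv · y) (funext fun y' => hfg x y' z hz)
  · exact Filter.EventuallyEq.deriv_eq <|
      (eventually_ne_nhds hz).mono fun z' hz' => hfg x y z' hz'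

noncomputable def gradFpot (x y z : ℝ) : Fin 3 → ℝ :=
  ![x^2/4 + y*z/2, x*z/2 - y^2*z/2, x*y/2 - y^3/6 - z*log z/4 - z/8]

noncomputable def hessFpot (x y z : ℝ) : Matrix (Fin 3) (Fin 3) ℝ :=
  !![x/2, z/2, y/2; z/2, -(y*z), x/2 - y^2/2; y/2, x/2 - y^2/2, -log z/4 - 3/8]

noncomputable def thirdDerivFpot (y z : ℝ) : Fin 3 → Matrix (Fin 3) (Fin 3) ℝ :=
  ![eta, !![0, 0, 1/2; 0, -z, -y; 1/2, -y, 0], !![0, 1/2, 0; 1/2, -y, 0; 0, 0, -(1/(4*z))]]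

section Derivatives

variable {x y z : ℝ}

lemma D_Fpot (hz : z ≠ 0) (k : Fin 3) : D k Fpot x y z = gradFpot x y z k := by
  fin_cases k <;>
    simp (disch := fun_prop (disch := assumption)) [D, P1, P2, P3, Fpot, gradFpot,
      deriv_fun_add, deriv_fun_sub, deriv_fun_mul] <;> field_simp <;> ring

lemma D_D_Fpot (hz : z ≠ 0) (j k : Fin 3) : D j (D k Fpot) x y z = hessFpot x y z j k := by
  rw [D_congr_of_ne_zero (fun x y z hz => D_Fpot hz k) j hz]
  fin_cases j <;> fin_cases k <;>
    simp (disch := fun_prop (disch := assumption)) [D, P1, P2, P3, gradFpot, hessFpot,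
      deriv_fun_add, deriv_fun_sub, deriv_fun_mul] <;> field_simp <;> ring

lemma D_D_D_Fpot (hz : z ≠ 0) (i j k : Fin 3) :
    D i (D j (D k Fpot)) x y z = thirdDerivFpot y z i j k := by
  rw [D_congr_of_ne_zero (fun x y z hz => D_D_Fpot hz j k) i hz]
  fin_cases i <;> fin_cases j <;> fin_cases k <;>
    simp (disch := fun_prop (disch := assumption)) [D, P1, P2, P3, hessFpot, thirdDerivFpot, eta,
      deriv_fun_sub, deriv_fun_mul] <;> field_simp

end Derivatives

lemma thirdDerivFpot_apply_cyclic (y z : ℝ) (i j k : Fin 3) :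
    thirdDerivFpot y z i j k = thirdDerivFpot y z k i j := by
  fin_cases i <;> fin_cases j <;> fin_cases k <;> rfl

lemma inv_eta : eta⁻¹ = !![2, 0, 0; 0, 0, 2; 0, 2, 0] := by
  refine Matrix.inv_eq_right_inv ?_
  simp [eta, Matrix.one_fin_three]

lemma isUnit_det_eta : IsUnit eta.det := by
  rw [isUnit_iff_ne_zero]
  simp [eta, Matrix.det_fin_three]

lemma commute_inv_eta_mul_thirdDerivFpot {y z : ℝ} (hz : z ≠ 0) (i n : Fin 3) :
    Commute (eta⁻¹ * thirdDerivFpot y z i) (eta⁻¹ * thirdDerivFpot y z n) := by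
  have hunit : eta⁻¹ * thirdDerivFpot y z 0 = 1 := Matrix.nonsing_inv_mul eta isUnit_det_eta
  have h12 : Commute (eta⁻¹ * thirdDerivFpot y z 1) (eta⁻¹ * thirdDerivFpot y z 2) := by
    rw [Commute, SemiconjBy, inv_eta]
    ext a b
    fin_cases a <;> fin_cases b <;>
      simp [thirdDerivFpot, Matrix.mul_apply, Fin.sum_univ_three] <;> field_simp <;> norm_num
  fin_cases i <;> fin_cases n <;> simp [hunit, h12, h12.symm]

/-- for t₃ > 0, the third derivatives ∂₁∂ᵢ∂ⱼ𝔽 form the constant invertible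
matrix η, and 𝔽 satisfies the WDVV associativity equations with respect to η. -/
theorem stmt_9 (t₁ t₂ t₃ : ℝ) (h : 0 < t₃) :
    (∀ i j : Fin 3, D 0 (D i (D j Fpot)) t₁ t₂ t₃ = eta i j) ∧
    IsUnit eta.det ∧
    (∀ i j q n : Fin 3,
      ∑ k : Fin 3, ∑ p : Fin 3,
        D i (D j (D k Fpot)) t₁ t₂ t₃ * eta⁻¹ k p * D p (D q (D n Fpot)) t₁ t₂ t₃
      = ∑ k : Fin 3, ∑ p : Fin 3,
        D n (D j (D k Fpot)) t₁ t₂ t₃ * eta⁻¹ k p * D p (D q (D i Fpot)) t₁ t₂ t₃) := by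
  refine ⟨fun i j => D_D_D_Fpot h.ne' 0 i j, isUnit_det_eta, fun i j q n => ?_⟩
  simp only [D_D_D_Fpot h.ne']
  exact wdvv_of_commute (thirdDerivFpot_apply_cyclic t₂ t₃)
    ((Matrix.isUnit_nonsing_inv_iff).2 ((Matrix.isUnit_iff_isUnit_det eta).2 isUnit_det_eta))
    (commute_inv_eta_mul_thirdDerivFpot h.ne') i j q n
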